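/- Let G be a finite graph that has a loop at some vertex, so that the quadratic monomial ideal I = I(G) is not squarefree. Then R/I is not rigid: there exists an R-linear map φ : I → R/I that does not lie in the image of δ*. -/

import Mathlib

open MvPolynomial

noncomputable section

/-- The edge ideal of the (possibly non-simple) graph on `V` given by the
symmetric relation `E`: the ideal generated by the monomials `X a * X b`
over all pairs `(a, b)` with `E a b`. -/
def edgeIdeal (k : Type*) [Field k] {V : Type*} (E : V → V → Prop) :
    Ideal (MvPolynomial V k) :=
  Ideal.span {m | ∃ a b, E a b ∧ m = X a * X b}

/-- The generator `X u * X v` of the edge ideal, as an element of the ideal. -/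
def edgeGen (k : Type*) [Field k] {V : Type*} (E : V → V → Prop) (u v : V) (h : E u v) :
    edgeIdeal k E :=
  ⟨X u * X v, Ideal.subset_span ⟨u, v, h, rfl⟩⟩

/-- `φ : I → R/I` is a trivial first-order deformation: it lies in the image of `δ*`,
i.e. it is induced by a `k`-derivation of `R`. -/
def IsTrivialDef (k : Type*) [Field k] {V : Type*} (E : V → V → Prop)
    (φ : edgeIdeal k E →ₗ[MvPolynomial V k] MvPolynomial V k ⧸ edgeIdeal k E) : Prop :=
  ∃ d : Derivation k (MvPolynomial V k) (MvPolynomial V k),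
    ∀ f : edgeIdeal k E, φ f = Ideal.Quotient.mk (edgeIdeal k E) (d f)

/-- `R/I(G)` is rigid: `δ*` is surjective, i.e. `T¹(R/I) = 0`. -/
def RigidEdgeIdeal (k : Type*) [Field k] {V : Type*} (E : V → V → Prop) : Prop :=
  ∀ φ : edgeIdeal k E →ₗ[MvPolynomial V k] MvPolynomial V k ⧸ edgeIdeal k E,
    IsTrivialDef k E φ

open scoped Classical in
/-- The neighborhood of a vertex. -/
def nbhd {V : Type*} [Fintype V] (E : V → V → Prop) (v : V) : Finset V :=
  Finset.univ.filter (fun w => E v w)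

open scoped Classical in
/-- The set `Λ_{ab}` of squarefree monomials `√(∏_{g ∈ Λ} x_{c g})` over all choice
functions `c` with `c g ∈ Λ_g = N(g) \ {a,b}` for every `g ∈ Λ = (N(a)\{b}) ∪ (N(b)\{a})`. -/
def LambdaSet (k : Type*) [Field k] {V : Type*} [Fintype V] [DecidableEq V]
    (E : V → V → Prop) (a b : V) : Set (MvPolynomial V k) :=
  {m | ∃ c : V → V,
    (∀ g ∈ (nbhd E a).erase b ∪ (nbhd E b).erase a, c g ∈ nbhd E g \ {a, b}) ∧
    m = ∏ v ∈ ((nbhd E a).erase b ∪ (nbhd E b).erase a).image c, X v}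

/-- `φ` is the type I map `φ^λ_{ab}` : it sends the generator `x_a x_b` to `λ` and every
other minimal monomial generator of the edge ideal to `0`. -/
def IsTypeI (k : Type*) [Field k] {V : Type*} (E : V → V → Prop) (a b : V) (hab : E a b)
    (lam : MvPolynomial V k)
    (φ : edgeIdeal k E →ₗ[MvPolynomial V k] MvPolynomial V k ⧸ edgeIdeal k E) : Prop :=
  φ (edgeGen k E a b hab) = Ideal.Quotient.mk (edgeIdeal k E) lam ∧
  ∀ u v (h : E u v), X u * X v ≠ (X a * X b : MvPolynomial V k) →
    φ (edgeGen k E u v h) = 0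

open scoped Classical in
/-- `Γ(L)`: the vertices of `N̄(a)` not in `L` that are adjacent in `N̄(a)`
(the complement of the underlying simple graph induced on `N(a)`) to some vertex of `L`. -/
def GammaF {V : Type*} [Fintype V] [DecidableEq V] (E : V → V → Prop) (a : V)
    (L : Finset V) : Finset V :=
  (nbhd E a \ L).filter (fun g => ∃ u ∈ L, u ≠ g ∧ ¬ E u g)

open scoped Classical in
/-- The set `Γ_{a,L}` of squarefree monomials `√(∏_{g ∈ Γ(L)} x_{c g})` over all choice
functions `c` with `c g ∈ Γ_g = N(g) \ {a}`. -/
def GammaSet (k : Type*) [Field k] {V : Type*} [Fintype V] [DecidableEq V]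
    (E : V → V → Prop) (a : V) (L : Finset V) : Set (MvPolynomial V k) :=
  {m | ∃ c : V → V,
    (∀ g ∈ GammaF E a L, c g ∈ (nbhd E g).erase a) ∧
    m = ∏ v ∈ (GammaF E a L).image c, X v}

/-- `φ` is the type II map `φ^λ_{a,L}` : it sends the generator `x_a x_u` to `λ·x_u`
for `u ∈ L` and every other minimal monomial generator of the edge ideal to `0`. -/
def IsTypeII (k : Type*) [Field k] {V : Type*} (E : V → V → Prop) (a : V) (L : Finset V)
    (lam : MvPolynomial V k)
    (φ : edgeIdeal k E →ₗ[MvPolynomial V k] MvPolynomial V k ⧸ edgeIdeal k E) : Prop :=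
  (∀ u ∈ L, ∀ h : E a u, φ (edgeGen k E a u h) =
      Ideal.Quotient.mk (edgeIdeal k E) (lam * X u)) ∧
  ∀ u v (h : E u v), (∀ x ∈ L, X u * X v ≠ (X a * X x : MvPolynomial V k)) →
    φ (edgeGen k E u v h) = 0

namespace Statement11Aux

variable {k : Type*} [Field k] {V : Type*}

lemma X_mul_X_eq (a b : V) :
    (X a * X b : MvPolynomial V k)
      = monomial (Finsupp.single a 1 + Finsupp.single b 1) 1 := by
  rw [X, X, monomial_mul, one_mul]

lemma edgeIdeal_eq_span (E : V → V → Prop) :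
    edgeIdeal k E = Ideal.span ((fun s => monomial s (1 : k)) ''
      {s : V →₀ ℕ | ∃ a b, E a b ∧ s = Finsupp.single a 1 + Finsupp.single b 1}) := by
  unfold edgeIdeal
  congr 1
  ext m
  constructor
  · rintro ⟨a, b, hab, rfl⟩
    exact ⟨_, ⟨a, b, hab, rfl⟩, (X_mul_X_eq a b).symm⟩
  · rintro ⟨s, ⟨a, b, hab, rfl⟩, rfl⟩
    exact ⟨a, b, hab, (X_mul_X_eq a b).symm⟩

lemma mem_edgeIdeal_iff {E : V → V → Prop} {f : MvPolynomial V k} :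
    f ∈ edgeIdeal k E ↔ ∀ d ∈ f.support, ∃ a b, E a b ∧
      Finsupp.single a 1 + Finsupp.single b 1 ≤ d := by
  rw [edgeIdeal_eq_span, mem_ideal_span_monomial_image]
  constructor
  · intro h d hd
    obtain ⟨s, ⟨a, b, hab, rfl⟩, hle⟩ := h d hd
    exact ⟨a, b, hab, hle⟩
  · intro h d hd
    obtain ⟨a, b, hab, hle⟩ := h d hd
    exact ⟨_, ⟨a, b, hab, rfl⟩, hle⟩

lemma support_modMonomial_subset (f : MvPolynomial V k) (s : V →₀ ℕ) :
    (f.modMonomial s).support ⊆ f.support := by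
  intro d hd
  rw [MvPolynomial.mem_support_iff] at hd ⊢
  by_cases h : s ≤ d
  · rw [MvPolynomial.coeff_modMonomial_of_le f h] at hd; exact absurd rfl hd
  · rwa [MvPolynomial.coeff_modMonomial_of_not_le f h] at hd

lemma modMonomial_mem {E : V → V → Prop} {f : MvPolynomial V k}
    (hf : f ∈ edgeIdeal k E) (s : V →₀ ℕ) : f.modMonomial s ∈ edgeIdeal k E := by
  rw [mem_edgeIdeal_iff] at hf ⊢
  exact fun d hd => hf d (support_modMonomial_subset f s hd)

lemma key_div (r f : MvPolynomial V k) (s : V →₀ ℕ) :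
    (r * f).divMonomial s
      = r * f.divMonomial s + r.divMonomial s * f.modMonomial s
        + (r.modMonomial s * f.modMonomial s).divMonomial s := by
  have h1 : r * f
      = monomial s 1 * (r.divMonomial s * (monomial s 1 * f.divMonomial s)
          + r.divMonomial s * f.modMonomial s + r.modMonomial s * f.divMonomial s)
        + r.modMonomial s * f.modMonomial s := by
    conv_lhs => rw [← MvPolynomial.divMonomial_add_modMonomial r s,
      ← MvPolynomial.divMonomial_add_modMonomial f s]
    ring
  have h2 : r * f.divMonomial s
      = monomial s 1 * r.divMonomial s * f.divMonomial s
        + r.modMonomial s * f.divMonomial s := by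
    conv_lhs => rw [← MvPolynomial.divMonomial_add_modMonomial r s]
    ring
  conv_lhs => rw [h1]
  rw [MvPolynomial.add_divMonomial, MvPolynomial.divMonomial_monomial_mul, h2]
  ring

/-- The candidate nontrivial map `f ↦ (f /ᵐᵒⁿᵒᵐⁱᵃˡ s) mod I`. -/
def phiMap (k : Type*) [Field k] {V : Type*} (E : V → V → Prop) (s : V →₀ ℕ)
    (hs : ∀ r f : MvPolynomial V k, f ∈ edgeIdeal k E →
      (r.modMonomial s * f.modMonomial s).divMonomial s ∈ edgeIdeal k E) :
    edgeIdeal k E →ₗ[MvPolynomial V k] MvPolynomial V k ⧸ edgeIdeal k E where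
  toFun f := Ideal.Quotient.mk _ ((f : MvPolynomial V k).divMonomial s)
  map_add' f g := by
    simp only [Submodule.coe_add, MvPolynomial.add_divMonomial]
    exact RingHom.map_add _ _ _
  map_smul' r f := by
    simp only [RingHom.id_apply, SetLike.val_smul, smul_eq_mul]
    have hmem : (r * (f : MvPolynomial V k)).divMonomial s
        - r * ((f : MvPolynomial V k).divMonomial s) ∈ edgeIdeal k E := by
      rw [key_div]
      have heq : r * (f : MvPolynomial V k).divMonomial s
            + r.divMonomial s * (f : MvPolynomial V k).modMonomial s
            + (r.modMonomial s * (f : MvPolynomial V k).modMonomial s).divMonomial s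
          - r * ((f : MvPolynomial V k).divMonomial s)
          = r.divMonomial s * (f : MvPolynomial V k).modMonomial s
            + (r.modMonomial s * (f : MvPolynomial V k).modMonomial s).divMonomial s := by
        ring
      rw [heq]
      exact Ideal.add_mem _ (Ideal.mul_mem_left _ _ (modMonomial_mem f.2 s))
        (hs r (f : MvPolynomial V k) f.2)
    rw [show Ideal.Quotient.mk (edgeIdeal k E) ((r * (f : MvPolynomial V k)).divMonomial s)
        = Ideal.Quotient.mk (edgeIdeal k E) (r * ((f : MvPolynomial V k).divMonomial s))
      from Ideal.Quotient.eq.mpr hmem]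
    rfl

lemma phiMap_apply (k : Type*) [Field k] {V : Type*} (E : V → V → Prop) (s : V →₀ ℕ)
    (hs : ∀ r f : MvPolynomial V k, f ∈ edgeIdeal k E →
      (r.modMonomial s * f.modMonomial s).divMonomial s ∈ edgeIdeal k E)
    (f : edgeIdeal k E) :
    phiMap k E s hs f = Ideal.Quotient.mk _ ((f : MvPolynomial V k).divMonomial s) := rfl

lemma caseA_div_zero (v : V) (r f : MvPolynomial V k) :
    ((r.modMonomial (Finsupp.single v 1)) * (f.modMonomial (Finsupp.single v 1))).divMonomial
      (Finsupp.single v 1) = 0 := by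
  classical
  apply MvPolynomial.ext
  intro d
  rw [MvPolynomial.coeff_divMonomial, MvPolynomial.coeff_zero, MvPolynomial.coeff_mul]
  apply Finset.sum_eq_zero
  rintro ⟨m1, m2⟩ hm
  rw [Finset.HasAntidiagonal.mem_antidiagonal] at hm
  by_cases h1 : Finsupp.single v 1 ≤ m1
  · rw [MvPolynomial.coeff_modMonomial_of_le _ h1, zero_mul]
  · have h2 : Finsupp.single v 1 ≤ m2 := by
      rw [Finsupp.single_le_iff] at h1 ⊢
      have := congrArg (fun g : V →₀ ℕ => g v) hm
      simp only [Finsupp.add_apply, Finsupp.single_eq_same] at this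
      omega
    rw [MvPolynomial.coeff_modMonomial_of_le _ h2, mul_zero]

lemma caseB_div_mem {E : V → V → Prop} (hsymm : Symmetric E) {v : V}
    (hB : ∀ u, E v u → u = v) (r f : MvPolynomial V k) (hf : f ∈ edgeIdeal k E) :
    ((r.modMonomial (Finsupp.single v 2)) * (f.modMonomial (Finsupp.single v 2))).divMonomial
      (Finsupp.single v 2) ∈ edgeIdeal k E := by
  classical
  rw [mem_edgeIdeal_iff]
  intro d hd
  rw [MvPolynomial.mem_support_iff, MvPolynomial.coeff_divMonomial,
    MvPolynomial.coeff_mul] at hd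
  obtain ⟨⟨m1, m2⟩, hmem, hne⟩ := Finset.exists_ne_zero_of_sum_ne_zero hd
  rw [Finset.HasAntidiagonal.mem_antidiagonal] at hmem
  have hm1 : MvPolynomial.coeff m1 (r.modMonomial (Finsupp.single v 2)) ≠ 0 :=
    left_ne_zero_of_mul hne
  have hm2 : MvPolynomial.coeff m2 (f.modMonomial (Finsupp.single v 2)) ≠ 0 :=
    right_ne_zero_of_mul hne
  have h2 : ¬ Finsupp.single v 2 ≤ m2 := fun h =>
    hm2 (MvPolynomial.coeff_modMonomial_of_le f h)
  rw [Finsupp.single_le_iff, not_le] at h2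
  have hm2f : m2 ∈ f.support := by
    rw [MvPolynomial.mem_support_iff]
    intro h0
    apply hm2
    rw [MvPolynomial.coeff_modMonomial_of_not_le f
      (by rw [Finsupp.single_le_iff]; omega), h0]
  obtain ⟨a, b, hab, hle⟩ := mem_edgeIdeal_iff.mp hf m2 hm2f
  refine ⟨a, b, hab, ?_⟩
  have hav : a ≠ v := by
    intro h
    have hbv : b = v := hB b (h ▸ hab)
    have h2le := Finsupp.le_def.mp hle v
    rw [h, hbv] at h2le
    simp only [Finsupp.add_apply, Finsupp.single_eq_same] at h2le
    omega
  have hbv : b ≠ v := by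
    intro h; subst h
    exact hav (hB a (hsymm hab))
  rw [Finsupp.le_def]
  intro w
  have hw := Finsupp.le_def.mp hle w
  have hsw := congrArg (fun g : V →₀ ℕ => g w) hmem
  simp only [Finsupp.add_apply] at hsw
  by_cases hwv : w = v
  · subst hwv
    simp [Finsupp.add_apply, Finsupp.single_eq_of_ne' hav, Finsupp.single_eq_of_ne' hbv]
  · have hz : (Finsupp.single v 2) w = 0 := Finsupp.single_eq_of_ne' (fun h => hwv h.symm)
    rw [Finsupp.add_apply] at hw ⊢
    omega

lemma not_pair_le_single {a b u : V} :
    ¬ (Finsupp.single a 1 + Finsupp.single b 1 ≤ Finsupp.single u (1 : ℕ)) := by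
  classical
  intro h
  have ha := Finsupp.le_def.mp h a
  have hb := Finsupp.le_def.mp h b
  rw [Finsupp.add_apply, Finsupp.single_eq_same] at ha hb
  have hua : u = a := by
    by_contra hne
    rw [Finsupp.single_eq_of_ne' hne] at ha
    omega
  subst hua
  have hub : u = b := by
    by_contra hne
    rw [Finsupp.single_eq_of_ne' hne] at hb
    omega
  subst hub
  rw [Finsupp.single_eq_same] at ha
  omega

lemma not_pair_le_zero {a b : V} :
    ¬ (Finsupp.single a 1 + Finsupp.single b 1 ≤ (0 : V →₀ ℕ)) := by
  intro h
  have ha := Finsupp.le_def.mp h a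
  rw [Finsupp.add_apply, Finsupp.single_eq_same, Finsupp.coe_zero, Pi.zero_apply] at ha
  omega

lemma coeff_X_mul_single_ne {w x : V} (hne : x ≠ w) (p : MvPolynomial V k) :
    MvPolynomial.coeff (Finsupp.single w 1) (X x * p) = 0 := by
  classical
  rw [MvPolynomial.coeff_X_mul']
  rw [if_neg]
  rw [Finsupp.mem_support_iff, Finsupp.single_eq_of_ne' (Ne.symm hne)]
  simp

lemma coeff_X_mul_single_same (w : V) (p : MvPolynomial V k) :
    MvPolynomial.coeff (Finsupp.single w 1) (X w * p) = MvPolynomial.coeff 0 p := by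
  classical
  rw [MvPolynomial.coeff_X_mul']
  rw [if_pos]
  · congr 1
    simp
  · rw [Finsupp.mem_support_iff, Finsupp.single_eq_same]
    simp

lemma coeff_zero_X_mul (w : V) (p : MvPolynomial V k) :
    MvPolynomial.coeff (0 : V →₀ ℕ) (X w * p) = 0 := by
  classical
  rw [MvPolynomial.coeff_X_mul']
  simp

end Statement11Aux

/-- If the graph `G` has a loop at some vertex (so that the quadratic
monomial ideal `I(G)` is not squarefree), then `R/I(G)` is not rigid: there is an
`R`-linear map `φ : I → R/I` not lying in the image of `δ*`. -/
theorem statement11 {k : Type*} [Field k] {V : Type*} [Fintype V] [DecidableEq V]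
    (E : V → V → Prop) (hsymm : Symmetric E) (hloop : ∃ v, E v v) :
    ∃ φ : edgeIdeal k E →ₗ[MvPolynomial V k] MvPolynomial V k ⧸ edgeIdeal k E,
      ¬ IsTrivialDef k E φ := by
  classical
  obtain ⟨v, hv⟩ := hloop
  by_cases hcase : ∃ u, u ≠ v ∧ E v u
  · -- Case A: `v` has a neighbour `u ≠ v`; use `f ↦ f / x_v`.
    obtain ⟨u, huv, hEvu⟩ := hcase
    refine ⟨Statement11Aux.phiMap k E (Finsupp.single v 1)
      (fun r f _ => by
        rw [Statement11Aux.caseA_div_zero]; exact (edgeIdeal k E).zero_mem), ?_⟩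
    rintro ⟨d, hd⟩
    -- the generator `x_v x_u`
    have h1 := hd (edgeGen k E v u hEvu)
    rw [Statement11Aux.phiMap_apply] at h1
    rw [show ((edgeGen k E v u hEvu : MvPolynomial V k)) = X v * X u from rfl,
      MvPolynomial.X_mul_divMonomial] at h1
    have m1 : (X u : MvPolynomial V k) - d (X v * X u) ∈ edgeIdeal k E :=
      Ideal.Quotient.eq.mp h1
    have hleib1 : d (X v * X u : MvPolynomial V k)
        = X v * d (X u) + X u * d (X v) := by
      rw [Derivation.leibniz]; simp only [smul_eq_mul]
    rw [hleib1] at m1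
    have hc : MvPolynomial.coeff 0 (d (X v : MvPolynomial V k)) = 1 := by
      by_contra hc
      have hne : MvPolynomial.coeff (Finsupp.single u 1)
          ((X u : MvPolynomial V k) - (X v * d (X u) + X u * d (X v))) ≠ 0 := by
        rw [MvPolynomial.coeff_sub, MvPolynomial.coeff_add,
          Statement11Aux.coeff_X_mul_single_ne (Ne.symm huv),
          Statement11Aux.coeff_X_mul_single_same, MvPolynomial.coeff_X, if_pos rfl, zero_add]
        intro h0
        rw [sub_eq_zero] at h0
        exact hc h0.symm
      obtain ⟨a, b, _, hle⟩ := Statement11Aux.mem_edgeIdeal_iff.mp m1 _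
        (MvPolynomial.mem_support_iff.mpr hne)
      exact Statement11Aux.not_pair_le_single hle
    -- the generator `x_v x_v`
    have h2 := hd (edgeGen k E v v hv)
    rw [Statement11Aux.phiMap_apply] at h2
    rw [show ((edgeGen k E v v hv : MvPolynomial V k)) = X v * X v from rfl,
      MvPolynomial.X_mul_divMonomial] at h2
    have m2 : (X v : MvPolynomial V k) - d (X v * X v) ∈ edgeIdeal k E :=
      Ideal.Quotient.eq.mp h2
    have hleib2 : d (X v * X v : MvPolynomial V k)
        = X v * d (X v) + X v * d (X v) := by
      rw [Derivation.leibniz]; simp only [smul_eq_mul]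
    rw [hleib2] at m2
    have hne2 : MvPolynomial.coeff (Finsupp.single v 1)
        ((X v : MvPolynomial V k) - (X v * d (X v) + X v * d (X v))) ≠ 0 := by
      rw [MvPolynomial.coeff_sub, MvPolynomial.coeff_add,
        Statement11Aux.coeff_X_mul_single_same, MvPolynomial.coeff_X, if_pos rfl, hc]
      intro h0
      exact one_ne_zero (by linear_combination (-1 : k) * h0)
    obtain ⟨a, b, _, hle⟩ := Statement11Aux.mem_edgeIdeal_iff.mp m2 _
      (MvPolynomial.mem_support_iff.mpr hne2)
    exact Statement11Aux.not_pair_le_single hle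
  · -- Case B: `v` has no neighbour other than itself; use `f ↦ f / x_v²`.
    push_neg at hcase
    have hB : ∀ u, E v u → u = v := by
      intro u hu
      by_contra hne
      exact hcase u hne hu
    refine ⟨Statement11Aux.phiMap k E (Finsupp.single v 2)
      (fun r f hf => Statement11Aux.caseB_div_mem hsymm hB r f hf), ?_⟩
    rintro ⟨d, hd⟩
    have h2 := hd (edgeGen k E v v hv)
    rw [Statement11Aux.phiMap_apply] at h2
    have hXX : ((edgeGen k E v v hv : MvPolynomial V k)) = monomial (Finsupp.single v 2) 1 := by
      rw [show ((edgeGen k E v v hv : MvPolynomial V k)) = X v * X v from rfl,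
        Statement11Aux.X_mul_X_eq]
      congr 1
      rw [← Finsupp.single_add]
    rw [hXX, MvPolynomial.divMonomial_monomial] at h2
    have m2 : (1 : MvPolynomial V k) - d (monomial (Finsupp.single v 2) 1) ∈ edgeIdeal k E :=
      Ideal.Quotient.eq.mp h2
    have hleib2 : d ((monomial (Finsupp.single v 2) 1 : MvPolynomial V k))
        = X v * d (X v) + X v * d (X v) := by
      have : (monomial (Finsupp.single v 2) 1 : MvPolynomial V k) = X v * X v := by
        rw [Statement11Aux.X_mul_X_eq]
        congr 1
        rw [← Finsupp.single_add]
      rw [this, Derivation.leibniz]; simp only [smul_eq_mul]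
    rw [hleib2] at m2
    have hne2 : MvPolynomial.coeff (0 : V →₀ ℕ)
        ((1 : MvPolynomial V k) - (X v * d (X v) + X v * d (X v))) ≠ 0 := by
      rw [MvPolynomial.coeff_sub, MvPolynomial.coeff_add,
        Statement11Aux.coeff_zero_X_mul, MvPolynomial.coeff_zero_one, add_zero, sub_zero]
      exact one_ne_zero
    obtain ⟨a, b, _, hle⟩ := Statement11Aux.mem_edgeIdeal_iff.mp m2 _
      (MvPolynomial.mem_support_iff.mpr hne2)
    exact Statement11Aux.not_pair_le_zero hle

end
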